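/- Let E be a Banach space with a family of continuous idempotent operators (π^α)_{α ∈ S}, π^α π^β = 0 for α ≠ β, π^α uniformly bounded by a constant M. Suppose (H_n)_{n ∈ ℕ} is a sequence of distinct nonzero ranges H_n = im π^{β_n}, and T ∈ L(E) an operator with ‖T‖ = 1 satisfying π^{β_{n+1}} ∘ T ∘ π^{β_n} = T restricted appropriately (T maps H_n into H_{n+1} acting as a norm-1 operator T_n there, and vanishes elsewhere in an appropriate sense). If S ∈ L(E) satisfies π^{β_{n+1}} ∘ S ∘ π^{β_n} = 0 for all but finitely many n, then ‖T - S‖ ≥ 1/M². -/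
import Mathlib

theorem stmt_18 {E : Type*} [NormedAddCommGroup E] [NormedSpace ℝ E] [CompleteSpace E]
    {S : Type*} (π : S → (E →L[ℝ] E))
    (hidem : ∀ α, π α ∘L π α = π α)
    (horth : ∀ α β, α ≠ β → π α ∘L π β = 0)
    {M : ℝ} (hM : 0 < M) (hMbd : ∀ α, ‖π α‖ ≤ M)
    (β : ℕ → S) (hβ : Function.Injective β)
    (T : E →L[ℝ] E) (hTnorm : ‖T‖ = 1)
    (hTblock : ∀ n, ‖π (β (n + 1)) ∘L T ∘L π (β n)‖ = 1)
    (Sop : E →L[ℝ] E)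
    (hS : ∃ N, ∀ n ≥ N, π (β (n + 1)) ∘L Sop ∘L π (β n) = 0) :
    1 / M ^ 2 ≤ ‖T - Sop‖ := by
  obtain ⟨N, hN⟩ := hS
  have key : π (β (N+1)) ∘L (T - Sop) ∘L π (β N) = π (β (N+1)) ∘L T ∘L π (β N) := by
    have h0 := hN N le_rfl
    rw [ContinuousLinearMap.sub_comp, ContinuousLinearMap.comp_sub, h0, sub_zero]
  have h1 : (1:ℝ) ≤ M * (‖T - Sop‖ * M) := by
    calc (1:ℝ) = ‖π (β (N+1)) ∘L (T - Sop) ∘L π (β N)‖ := by rw [key, hTblock]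
    _ ≤ ‖π (β (N+1))‖ * ‖(T - Sop) ∘L π (β N)‖ := ContinuousLinearMap.opNorm_comp_le _ _
    _ ≤ ‖π (β (N+1))‖ * (‖T - Sop‖ * ‖π (β N)‖) :=
        mul_le_mul_of_nonneg_left (ContinuousLinearMap.opNorm_comp_le _ _) (norm_nonneg _)
    _ ≤ M * (‖T - Sop‖ * M) :=
        mul_le_mul (hMbd _) (mul_le_mul_of_nonneg_left (hMbd _) (norm_nonneg _))
          (by positivity) hM.le
  rw [div_le_iff₀ (by positivity)]
  nlinarith [norm_nonneg (T - Sop)]
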